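/- Let V be a type and (T, ≤) a partially ordered set, and order P = V × T by (v₁, t₁) ≤ (v₂, t₂) iff (v₁, t₁) = (v₂, t₂) or t₁ < t₂ (this is a partial order). Let 𝒳 be the collection of well-ordered subsets of P, let ι and κ be finite types, and let s : (ι → 𝒳) → (κ → 𝒳). Then s is a causal system if and only if s is strictly causal in the sense of Matsikoudis and Lee, i.e.: for all 𝐗, 𝐗' : ι → 𝒳, every o : κ, and every t : T, if for every i : ι the sets {(v, t') ∈ 𝐗 i | t' < t} and {(v, t') ∈ 𝐗' i | t' < t} coincide, then {v : V | (v, t) ∈ s 𝐗 o} = {v : V | (v, t) ∈ s 𝐗' o} (the output at any time t depends only on the inputs occurring strictly before t). -/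
import Mathlib


/-- The order on timed values `V × T`: `(v₁, t₁) ≤ (v₂, t₂)` iff the pairs are
equal or `t₁ < t₂`. -/
instance TimedVal.instPartialOrder (V T : Type*) [PartialOrder T] :
    PartialOrder (V × T) where
  le p q := p = q ∨ p.2 < q.2
  le_refl p := Or.inl rfl
  le_trans p q r h1 h2 := by
    rcases h1 with rfl | h1
    · exact h2
    rcases h2 with rfl | h2
    · exact Or.inr h1
    · exact Or.inr (h1.trans h2)
  le_antisymm p q h1 h2 := by
    rcases h1 with rfl | h1
    · rfl
    rcases h2 with rfl | h2
    · rfl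
    · exact absurd (h1.trans h2) (lt_irrefl _)

/-- The collection of subsets of `V × T` that are well-ordered by `<`. -/
def WOSubset (V T : Type*) [PartialOrder T] : Type _ :=
  {X : Set (V × T) // IsChain (· ≤ ·) X ∧ X.WellFoundedOn (· < ·)}

/-- A system over well-ordered sets of timed values is causal if and only if
it is strictly causal in the sense of Matsikoudis and Lee: the output at any
time `t` depends only on the inputs occurring strictly before `t`. -/
theorem stmt_18 {V T : Type*} [PartialOrder T]
    {ι κ : Type*} [Fintype ι] [Fintype κ]
    (s : (ι → WOSubset V T) → (κ → WOSubset V T)) :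
    (∀ Xs Xs' : ι → WOSubset V T, ∀ o : κ,
        ∀ y ∈ symmDiff (s Xs o).1 (s Xs' o).1,
          ∃ i : ι, ∃ x ∈ symmDiff (Xs i).1 (Xs' i).1, x < y) ↔
      (∀ Xs Xs' : ι → WOSubset V T, ∀ o : κ, ∀ t : T,
        (∀ i : ι, {p : V × T | p ∈ (Xs i).1 ∧ p.2 < t} =
            {p : V × T | p ∈ (Xs' i).1 ∧ p.2 < t}) →
          {v : V | (v, t) ∈ (s Xs o).1} = {v : V | (v, t) ∈ (s Xs' o).1}) := by

  have hlt : ∀ p q : V × T, p < q ↔ p.2 < q.2 := by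
    intro p q
    constructor
    · rintro ⟨h1 | h1, h2⟩
      · exact absurd (Or.inl rfl) (h1 ▸ h2)
      · exact h1
    · intro h
      refine ⟨Or.inr h, ?_⟩
      rintro (rfl | h2)
      · exact lt_irrefl _ h
      · exact lt_irrefl _ (h.trans h2)
  constructor
  · intro hc Xs Xs' o t ht
    ext v
    constructor <;> intro hv
    · by_contra hv'
      obtain ⟨i, x, hx, hxlt⟩ := hc Xs Xs' o (v, t) (Set.mem_symmDiff.2 (Or.inl ⟨hv, hv'⟩))
      rw [hlt] at hxlt
      rcases Set.mem_symmDiff.1 hx with ⟨h1, h2⟩ | ⟨h1, h2⟩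
      · exact h2 ((Set.ext_iff.1 (ht i) x).1 ⟨h1, hxlt⟩).1
      · exact h2 ((Set.ext_iff.1 (ht i) x).2 ⟨h1, hxlt⟩).1
    · by_contra hv'
      obtain ⟨i, x, hx, hxlt⟩ := hc Xs Xs' o (v, t) (Set.mem_symmDiff.2 (Or.inr ⟨hv, hv'⟩))
      rw [hlt] at hxlt
      rcases Set.mem_symmDiff.1 hx with ⟨h1, h2⟩ | ⟨h1, h2⟩
      · exact h2 ((Set.ext_iff.1 (ht i) x).1 ⟨h1, hxlt⟩).1
      · exact h2 ((Set.ext_iff.1 (ht i) x).2 ⟨h1, hxlt⟩).1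
  · intro hs Xs Xs' o y hy
    by_contra hno
    push_neg at hno
    have ht : ∀ i : ι, {p : V × T | p ∈ (Xs i).1 ∧ p.2 < y.2} =
        {p : V × T | p ∈ (Xs' i).1 ∧ p.2 < y.2} := by
      intro i
      ext p
      simp only [Set.mem_setOf_eq]
      constructor
      · rintro ⟨hp, hpt⟩
        refine ⟨?_, hpt⟩
        by_contra hp'
        exact absurd ((hlt p y).2 hpt)
          (hno i p (Set.mem_symmDiff.2 (Or.inl ⟨hp, hp'⟩)))
      · rintro ⟨hp, hpt⟩
        refine ⟨?_, hpt⟩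
        by_contra hp'
        exact absurd ((hlt p y).2 hpt)
          (hno i p (Set.mem_symmDiff.2 (Or.inr ⟨hp, hp'⟩)))
    have := hs Xs Xs' o y.2 ht
    rcases Set.mem_symmDiff.1 hy with ⟨h1, h2⟩ | ⟨h1, h2⟩
    · exact h2 ((Set.ext_iff.1 this y.1).1 h1)
    · exact h2 ((Set.ext_iff.1 this y.1).2 h1)
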